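/- arXiv:1408.1265 — 5 statements merged into one kernel-verified Lean document; each statement's English description precedes it below -/
import Mathlib

section
/- Let π = v₀v₁…v_ℓ be a chordless s-t path in a simple graph G on n vertices. Define the reduced degree dᵢ of vᵢ as the number of neighbours of vᵢ that are not good neighbours of any vⱼ with j ≤ i, plus one (for v_{i+1}). Then the sum of the reduced degrees over all vertices of π is at most 2n. -/
/-!
Double counting: it suffices that every vertex `x` lies in at most two of the sets counted by the
`dᵢ`. If `x = v_m`, chordlessness leaves only `i = m ± 1`. Otherwise let `v_a` be the first and
`v_b` the last neighbour of `x` on `π`. If `b ≥ a + 2`, replacing `v_{a+1} … v_{b-1}` by `x` gives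
a chordless `s`-`t` path starting with `v₀ … v_a x`, so `x` is good for `v_a` and drops out of
every set with `i ≥ a`. Hence `x` is counted at most for `i = a` and `i = a + 1`.
-/

open SimpleGraph

variable {V : Type*}

/-- `l` is a (simple) path in `G`, given as its list of vertices. -/
def IsPathL (G : SimpleGraph V) (l : List V) : Prop :=
  l.Chain' G.Adj ∧ l.Nodup

/-- `l` is an `s`-`t` path in `G`. -/
def IsStPathL (G : SimpleGraph V) (s t : V) (l : List V) : Prop :=
  IsPathL G l ∧ l.head? = some s ∧ l.getLast? = some t

/-- No two non-consecutive vertices of `l` are adjacent in `G`. -/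
def NoChord (G : SimpleGraph V) (l : List V) : Prop :=
  ∀ (i j : ℕ) (hi : i < l.length) (hj : j < l.length), i + 1 < j →
    ¬ G.Adj (l.get ⟨i, hi⟩) (l.get ⟨j, hj⟩)

/-- `l` is a chordless (induced) `s`-`t` path in `G`. -/
def IsChordlessStPathL (G : SimpleGraph V) (s t : V) (l : List V) : Prop :=
  IsStPathL G s t l ∧ NoChord G l

/-- `x` is a good neighbour of `vᵢ` (the `i`-th vertex of `l`): some chordless `s`-`t`
path of `G` has `v₀ v₁ … vᵢ x` as a prefix. -/
def GoodNbr (G : SimpleGraph V) (s t : V) (l : List V) (i : ℕ) (x : V) : Prop :=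
  ∃ l' : List V, IsChordlessStPathL G s t l' ∧ (l.take (i + 1) ++ [x]) <+: l'

open Finset in
theorem Fintype.sum_ncard_le_mul_card {ι α : Type*} [Fintype ι] [Fintype α] (S : ι → Set α)
    {k : ℕ} (h : ∀ x, {i | x ∈ S i}.ncard ≤ k) : ∑ i, (S i).ncard ≤ k * Fintype.card α := by
  classical
  calc ∑ i, (S i).ncard = ∑ i, #(univ.bipartiteAbove (fun i x => x ∈ S i) i) := by
        simp [bipartiteAbove, Set.ncard_eq_toFinset_card']
    _ = ∑ x, #(univ.bipartiteBelow (fun i x => x ∈ S i) x) :=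
        sum_card_bipartiteAbove_eq_sum_card_bipartiteBelow _
    _ ≤ ∑ _x : α, k := sum_le_sum fun x _ => by
        simpa [bipartiteBelow, Set.ncard_eq_toFinset_card'] using h x
    _ = k * Fintype.card α := by simp [mul_comm]

section

variable {G : SimpleGraph V}

theorem noChord_append {A B : List V} :
    NoChord G (A ++ B) ↔ NoChord G A ∧ NoChord G B ∧
      ∀ i j (hi : i < A.length) (hj : j < B.length), i + 1 < A.length + j → ¬ G.Adj A[i] B[j] := by
  simp only [NoChord, List.get_eq_getElem]
  refine ⟨fun h => ⟨fun i j hi hj hij => ?_, fun i j hi hj hij => ?_, fun i j hi hj hij => ?_⟩,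
    fun ⟨hA, hB, hAB⟩ i j hi hj hij => ?_⟩
  · simpa [List.getElem_append_left hi, List.getElem_append_left hj] using
      h i j (by simp; omega) (by simp; omega) hij
  · simpa using h (A.length + i) (A.length + j) (by simp; omega) (by simp; omega) (by omega)
  · simpa [List.getElem_append_left hi] using
      h i (A.length + j) (by simp; omega) (by simp; omega) hij
  · grind

theorem NoChord.take {l : List V} (h : NoChord G l) (n : ℕ) : NoChord G (l.take n) := by
  rw [← List.take_append_drop n l] at h
  exact (noChord_append.mp h).1

theorem NoChord.drop {l : List V} (h : NoChord G l) (n : ℕ) : NoChord G (l.drop n) := by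
  rw [← List.take_append_drop n l] at h
  exact (noChord_append.mp h).2.1

theorem NoChord.eq_succ_or_eq_succ_of_adj {l : List V} (h : NoChord G l) {i j : ℕ}
    (hi : i < l.length) (hj : j < l.length) (hadj : G.Adj l[i] l[j]) : j = i + 1 ∨ i = j + 1 := by
  rcases lt_trichotomy i j with hij | rfl | hij
  · by_contra hne
    exact h i j hi hj (by omega) (by simpa using hadj)
  · exact absurd hadj G.irrefl
  · by_contra hne
    exact h j i hj hi (by omega) (by simpa using hadj.symm)

namespace IsChordlessStPathL

variable {s t x : V} {l : List V}

theorem take_append_cons_drop (hl : IsChordlessStPathL G s t l) (hx : x ∉ l) {a b : ℕ}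
    (hab : a + 2 ≤ b) (hb : b < l.length) (hxa : G.Adj l[a] x) (hxb : G.Adj x l[b])
    (hfirst : ∀ k (hk : k < a), ¬ G.Adj (l[k]'(by omega)) x)
    (hlast : ∀ k (hk : k < l.length), b < k → ¬ G.Adj x l[k]) :
    IsChordlessStPathL G s t (l.take (a + 1) ++ x :: l.drop b) := by
  obtain ⟨⟨⟨hchain, hnodup⟩, hs, ht⟩, hC⟩ := hl
  have hchain : (l.take (a + 1) ++ x :: l.drop b).IsChain G.Adj := by
    refine (hchain.take _).append (List.isChain_cons.mpr ⟨?_, hchain.drop b⟩) ?_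
    · simpa [List.getElem?_eq_getElem hb] using hxb
    · simpa [List.getLast?_take, List.getElem?_eq_getElem (show a < l.length by omega)] using hxa
  have hnodup : (l.take (a + 1) ++ x :: l.drop b).Nodup := by
    have hsub : (l.take (a + 1) ++ l.drop b).Sublist l := by
      conv_rhs => rw [← List.take_append_drop (a + 1) l]
      exact (List.drop_sublist_drop_left l (by omega)).append_left _
    rw [List.nodup_middle]
    exact List.nodup_cons.mpr ⟨fun hmem => hx (hsub.subset hmem), hsub.nodup hnodup⟩
  have hC : NoChord G (l.take (a + 1) ++ x :: l.drop b) := by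
    have hxD : NoChord G ([x] ++ l.drop b) := by
      refine noChord_append.mpr ⟨fun i j hi hj hij => ?_, hC.drop b, fun i j hi hj hij => ?_⟩
      · simp only [List.length_singleton] at hi hj
        omega
      · simp only [List.length_singleton, List.length_drop] at hj hij
        simpa using hlast (b + j) (by omega) (by omega)
    refine noChord_append.mpr ⟨hC.take _, hxD, fun i j hi hj hij => ?_⟩
    simp only [List.length_take, List.length_cons, List.length_drop] at hi hj hij
    cases j with
    | zero => simpa using hfirst i (by omega)
    | succ j => simpa using hC i (b + j) (by omega) (by omega) (by omega)
  refine ⟨⟨⟨hchain, hnodup⟩, ?_, ?_⟩, hC⟩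
  · simp [List.head?_take, hs]
  · rw [List.getLast?_append, List.getLast?_cons, List.getLast?_drop]
    simp [ht, show ¬ l.length ≤ b by omega]

theorem goodNbr_of_adj_of_adj (hl : IsChordlessStPathL G s t l) (hx : x ∉ l) {a i : ℕ}
    (hai : a + 2 ≤ i) (hi : i < l.length) (hxa : G.Adj l[a] x) (hxi : G.Adj l[i] x)
    (hfirst : ∀ k (hk : k < a), ¬ G.Adj (l[k]'(by omega)) x) : GoodNbr G s t l a x := by
  classical
  let P k := ∃ hk : k < l.length, G.Adj l[k] x
  set b := Nat.findGreatest P l.length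
  have hPi : P i := ⟨hi, hxi⟩
  have hib : i ≤ b := Nat.le_findGreatest hi.le hPi
  obtain ⟨hb, hxb⟩ : P b := Nat.findGreatest_spec hi.le hPi
  have hlast : ∀ k (hk : k < l.length), b < k → ¬ G.Adj x l[k] := fun k hk hbk hxk =>
    Nat.findGreatest_is_greatest hbk hk.le ⟨hk, hxk.symm⟩
  exact ⟨_, hl.take_append_cons_drop hx (by omega) hb hxa hxb.symm hfirst hlast, l.drop b,
    by simp⟩

end IsChordlessStPathL

end

def reducedNbrSet (G : SimpleGraph V) (s t : V) (l : List V) (i : Fin l.length) : Set V :=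
  (G.neighborSet (l.get i) \ ⋃ j ∈ {j : ℕ | j ≤ (i : ℕ)}, {x | GoodNbr G s t l j x}) ∪
    {x | ∃ h : (i : ℕ) + 1 < l.length, x = l.get ⟨(i : ℕ) + 1, h⟩}

section

variable {G : SimpleGraph V} {s t x : V} {l : List V}

theorem mem_reducedNbrSet {i : Fin l.length} :
    x ∈ reducedNbrSet G s t l i ↔ (G.Adj l[i] x ∧ ∀ j ≤ (i : ℕ), ¬ GoodNbr G s t l j x) ∨
      ∃ h : (i : ℕ) + 1 < l.length, x = l[(i : ℕ) + 1] := by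
  simp [reducedNbrSet]

namespace IsChordlessStPathL

theorem succ_eq_or_eq_succ_of_getElem_mem_reducedNbrSet
    (hl : IsChordlessStPathL G s t l) {m : ℕ} (hm : m < l.length) {i : Fin l.length}
    (h : l[m] ∈ reducedNbrSet G s t l i) : (i : ℕ) + 1 = m ∨ (i : ℕ) = m + 1 := by
  obtain ⟨⟨⟨-, hnodup⟩, -⟩, hC⟩ := hl
  rcases mem_reducedNbrSet.mp h with ⟨hadj, -⟩ | ⟨_, hmi⟩
  · rcases hC.eq_succ_or_eq_succ_of_adj i.isLt hm hadj with h | h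
    · exact .inl h.symm
    · exact .inr h
  · exact .inl (hnodup.getElem_inj_iff.mp hmi).symm

theorem eq_or_eq_succ_of_mem_reducedNbrSet
    (hl : IsChordlessStPathL G s t l) (hx : x ∉ l) {a : ℕ} (ha : a < l.length)
    (hxa : G.Adj l[a] x) (hfirst : ∀ k (hk : k < a), ¬ G.Adj (l[k]'(by omega)) x)
    {i : Fin l.length} (h : x ∈ reducedNbrSet G s t l i) : (i : ℕ) = a ∨ (i : ℕ) = a + 1 := by
  rcases mem_reducedNbrSet.mp h with ⟨hxi, hbad⟩ | ⟨_, rfl⟩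
  · have hai : a ≤ i := not_lt.mp fun hia => hfirst i hia hxi
    by_contra hne
    exact hbad a hai (hl.goodNbr_of_adj_of_adj hx (by omega) i.isLt hxa hxi hfirst)
  · exact absurd (List.getElem_mem _) hx

theorem ncard_setOf_mem_reducedNbrSet_le_two
    (hl : IsChordlessStPathL G s t l) (x : V) :
    {i | x ∈ reducedNbrSet G s t l i}.ncard ≤ 2 := by
  suffices ∃ c d : ℕ, ∀ i, x ∈ reducedNbrSet G s t l i → (i : ℕ) = c ∨ (i : ℕ) = d by
    obtain ⟨c, d, hcd⟩ := this
    calc _ ≤ ({c, d} : Set ℕ).ncard :=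
          Set.ncard_le_ncard_of_injOn Fin.val hcd Fin.val_injective.injOn (Set.toFinite _)
      _ ≤ 2 := by simpa using Set.ncard_insert_le c {d}
  by_cases hx : x ∈ l
  · obtain ⟨m, hm, rfl⟩ := List.getElem_of_mem hx
    refine ⟨m - 1, m + 1, fun i hi => ?_⟩
    have := hl.succ_eq_or_eq_succ_of_getElem_mem_reducedNbrSet hm hi
    omega
  by_cases hN : ∃ a, ∃ ha : a < l.length, G.Adj l[a] x
  · classical
    obtain ⟨ha, hxa⟩ := Nat.find_spec hN
    exact ⟨_, _, fun i hi => hl.eq_or_eq_succ_of_mem_reducedNbrSet hx ha hxa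
      (fun k hk hxk => Nat.find_min hN hk ⟨_, hxk⟩) hi⟩
  · refine ⟨0, 0, fun i hi => ?_⟩
    rcases mem_reducedNbrSet.mp hi with ⟨hxi, -⟩ | ⟨_, rfl⟩
    · exact absurd ⟨i, i.isLt, hxi⟩ hN
    · exact absurd (List.getElem_mem _) hx

end IsChordlessStPathL

end

/-- For a chordless `s`-`t` path `π = v₀ … v_ℓ`, the sum over `i` of the reduced degrees
`dᵢ = |(N(vᵢ) \ ⋃_{j ≤ i} good(vⱼ)) ∪ {v_{i+1}}|` is at most `2n`. -/
theorem stmt4 [Fintype V] (G : SimpleGraph V) (s t : V) (l : List V)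
    (hl : IsChordlessStPathL G s t l) :
    ∑ i : Fin l.length,
      ((G.neighborSet (l.get i) \ ⋃ j ∈ {j : ℕ | j ≤ (i : ℕ)}, {x | GoodNbr G s t l j x}) ∪
        {x | ∃ h : (i : ℕ) + 1 < l.length, x = l.get ⟨(i : ℕ) + 1, h⟩}).ncard
      ≤ 2 * Fintype.card V :=
  Fintype.sum_ncard_le_mul_card (reducedNbrSet G s t l) hl.ncard_setOf_mem_reducedNbrSet_le_two
end

section
/- Let π be a chordless s-t path in a simple graph G, and let x be any vertex of G not on π. Then x is adjacent to at most two vertices of π unless x is a good neighbour of some vertex of π; more precisely, if x is not a good neighbour of any vertex of π (no chordless s-t path has prefix v₀…vᵢx for any i), then x has at most two neighbours on π, and they are consecutive on π. -/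
open SimpleGraph

variable {V : Type*}

/-!
Let `vₐ` and `v_b` be the first and the last neighbour of `x` on `π`. If `a + 1 < b`, then
`v₀ … vₐ x v_b … v_ℓ` is again a chordless `s`-`t` path: the skipped segment strictly between
`vₐ` and `v_b` is nonempty, so `π` has no edge between the two remaining pieces, and `x` sees
only `vₐ` and `v_b`. So `x` would be a good neighbour of `vₐ`. Hence any two neighbours of `x`
on `π` are consecutive, and there are at most two of them.
-/

theorem List.exists_split_at_first_last {α : Type*} {P : α → Prop} {l : List α} {i j : ℕ}
    (hi : i < l.length) (hj : j < l.length) (hij : i + 1 < j) (hPi : P l[i]) (hPj : P l[j]) :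
    ∃ p u m v q, l = p ++ u :: (m ++ v :: q) ∧ m ≠ [] ∧ P u ∧ P v ∧
      (∀ w ∈ p, ¬ P w) ∧ ∀ w ∈ q, ¬ P w := by
  classical
  let Q k := ∃ hk : k < l.length, P l[k]
  have hQ : ∃ k, Q k := ⟨i, hi, hPi⟩
  set a := Nat.find hQ
  set b := Nat.findGreatest Q l.length
  obtain ⟨ha, hPa⟩ : Q a := Nat.find_spec hQ
  obtain ⟨hb, hPb⟩ : Q b := Nat.findGreatest_spec hj.le ⟨hj, hPj⟩
  have hai : a ≤ i := Nat.find_min' hQ ⟨hi, hPi⟩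
  have hjb : j ≤ b := Nat.le_findGreatest hj.le ⟨hj, hPj⟩
  refine ⟨l.take a, l[a], (l.drop (a + 1)).take (b - a - 1), l[b], l.drop (b + 1),
    ?_, ?_, hPa, hPb, ?_, ?_⟩
  · have hmid : l.drop (a + 1) = (l.drop (a + 1)).take (b - a - 1) ++ l[b] :: l.drop (b + 1) := by
      rw [List.getElem_cons_drop]
      conv_lhs => rw [← List.take_append_drop (b - a - 1) (l.drop (a + 1))]
      rw [List.drop_drop]
      congr 2
      omega
    rw [← hmid, List.getElem_cons_drop, List.take_append_drop]
  · simp only [ne_eq, List.take_eq_nil_iff, List.drop_eq_nil_iff]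
    omega
  · intro w hw hPw
    obtain ⟨k, hk, rfl⟩ := List.mem_iff_getElem.mp hw
    rw [List.getElem_take] at hPw
    have := Nat.find_min' hQ ⟨_, hPw⟩
    simp at hk
    omega
  · intro w hw hPw
    obtain ⟨k, hk, rfl⟩ := List.mem_iff_getElem.mp hw
    rw [List.getElem_drop] at hPw
    simp only [List.length_drop] at hk
    have : b + 1 + k ≤ b := Nat.le_findGreatest (by omega) (show Q (b + 1 + k) from ⟨_, hPw⟩)
    omega

theorem noChord_cons {G : SimpleGraph V} {u : V} {l : List V} :
    NoChord G (u :: l) ↔ (∀ v ∈ l.tail, ¬ G.Adj u v) ∧ NoChord G l := by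
  constructor
  · intro h
    refine ⟨fun v hv huv => ?_, fun i j hi hj hij => h (i + 1) (j + 1) ?_ ?_ ?_⟩
    · obtain ⟨k, hk, rfl⟩ := List.mem_iff_getElem.mp hv
      rw [List.getElem_tail] at huv
      exact h 0 (k + 2) (by simp) (by simp at hk ⊢; omega) (by omega) huv
    all_goals simpa
  · rintro ⟨hu, hl⟩ (_ | i) (_ | j) hi hj hij
    · omega
    · simp only [List.get_eq_getElem, List.getElem_cons_zero, List.getElem_cons_succ]
      exact hu _ (List.getElem_mem_tail l (by omega) _)
    · omega
    · simpa using hl i j (by simpa using hi) (by simpa using hj) (by omega)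

theorem noChord_append_cons {G : SimpleGraph V} {l₁ l₂ : List V} {u : V} :
    NoChord G (l₁ ++ u :: l₂) ↔
      NoChord G (l₁ ++ [u]) ∧ NoChord G (u :: l₂) ∧ ∀ v ∈ l₁, ∀ w ∈ l₂, ¬ G.Adj v w := by
  induction l₁ with
  | nil =>
    have : NoChord G [] := fun _ _ hi => absurd hi (Nat.not_lt_zero _)
    simp [noChord_cons, this]
  | cons v l₁ ih =>
    have htail : ∀ w, w ∈ (l₁ ++ u :: l₂).tail ↔ w ∈ (l₁ ++ [u]).tail ∨ w ∈ l₂ := by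
      cases l₁ <;> simp [or_assoc]
    rw [List.cons_append, List.cons_append, noChord_cons, noChord_cons, ih]
    simp only [htail, List.mem_cons]
    grind

theorem NoChord.bypass {G : SimpleGraph V} {p m q : List V} {u v x : V}
    (hl : NoChord G (p ++ u :: (m ++ v :: q))) (hm : m ≠ [])
    (hp : ∀ w ∈ p, ¬ G.Adj x w) (hq : ∀ w ∈ q, ¬ G.Adj x w) :
    NoChord G (p ++ u :: x :: v :: q) := by
  obtain ⟨hpu, humvq, hp_mvq⟩ := noChord_append_cons.mp hl
  obtain ⟨humv, hvq, hum_q⟩ := (noChord_append_cons (l₁ := u :: m)).mp humvq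
  have huv : ¬ G.Adj u v := by
    obtain ⟨w, m, rfl⟩ := List.exists_cons_of_ne_nil hm
    exact (noChord_cons.mp humv).1 v (by simp)
  refine noChord_append_cons.mpr ⟨hpu, noChord_cons.mpr ⟨?_, noChord_cons.mpr ⟨hq, hvq⟩⟩, ?_⟩
  · simpa [huv] using hum_q u (by simp)
  · simp only [List.mem_cons]
    rintro w hw w' (rfl | rfl | hw')
    · exact fun h => hp w hw h.symm
    · exact hp_mvq w hw w' (by simp)
    · exact hp_mvq w hw w' (by simp [hw'])

theorem IsPathL.bypass {G : SimpleGraph V} {p m q : List V} {u v x : V}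
    (hl : IsPathL G (p ++ u :: (m ++ v :: q))) (hx : x ∉ p ++ u :: (m ++ v :: q))
    (hxu : G.Adj x u) (hxv : G.Adj x v) :
    IsPathL G (p ++ u :: x :: v :: q) := by
  obtain ⟨hchain, hnodup⟩ := hl
  have hpu : (p ++ [u]).IsChain G.Adj := hchain.infix ⟨[], m ++ v :: q, by simp⟩
  have hvq : (v :: q).IsChain G.Adj := hchain.infix ⟨p ++ u :: m, [], by simp⟩
  constructor
  · rw [← List.singleton_append, ← List.append_assoc]
    exact List.isChain_append.mpr ⟨hpu, .cons_cons hxv hvq, by simpa using hxu.symm⟩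
  · rw [← List.singleton_append, ← List.append_assoc, List.nodup_middle, List.nodup_cons]
    have hsub : List.Sublist (p ++ [u] ++ v :: q) (p ++ u :: (m ++ v :: q)) := by simp
    exact ⟨fun h => hx (hsub.subset h), hnodup.sublist hsub⟩

theorem IsChordlessStPathL.bypass {G : SimpleGraph V} {s t : V} {p m q : List V} {u v x : V}
    (hl : IsChordlessStPathL G s t (p ++ u :: (m ++ v :: q))) (hm : m ≠ [])
    (hx : x ∉ p ++ u :: (m ++ v :: q)) (hxu : G.Adj x u) (hxv : G.Adj x v)
    (hp : ∀ w ∈ p, ¬ G.Adj x w) (hq : ∀ w ∈ q, ¬ G.Adj x w) :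
    IsChordlessStPathL G s t (p ++ u :: x :: v :: q) := by
  obtain ⟨⟨hpath, hs, ht⟩, hnc⟩ := hl
  refine ⟨⟨hpath.bypass hx hxu hxv, ?_, ?_⟩, hnc.bypass hm hp hq⟩
  · simpa using hs
  · rw [← ht, ← List.cons_append, ← List.append_assoc]
    simp [List.getLast?_append, List.getLast?_cons]

theorem exists_goodNbr_of_adj_of_adj {G : SimpleGraph V} {s t x : V} {l : List V}
    (hl : IsChordlessStPathL G s t l) (hx : x ∉ l) {i j : ℕ} (hi : i < l.length)
    (hj : j < l.length) (hij : i + 1 < j) (hxi : G.Adj x l[i]) (hxj : G.Adj x l[j]) :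
    ∃ k, GoodNbr G s t l k x := by
  obtain ⟨p, u, m, v, q, rfl, hm, hxu, hxv, hp, hq⟩ :=
    List.exists_split_at_first_last hi hj hij hxi hxj
  exact ⟨p.length, p ++ u :: x :: v :: q, hl.bypass hm hx hxu hxv hp hq, v :: q,
    by simp [List.take_length_add_append]⟩

theorem List.ncard_setOf_mem_and_le_two {α : Type*} {P : α → Prop} {l : List α}
    (hclose : ∀ i j (hi : i < l.length) (hj : j < l.length), P l[i] → P l[j] → j ≤ i + 1) :
    {v | v ∈ l ∧ P v}.ncard ≤ 2 := by
  by_contra! h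
  obtain ⟨_, _, _, ⟨ha, hPa⟩, ⟨hb, hPb⟩, ⟨hc, hPc⟩, hab, hac, hbc⟩ :=
    (Set.two_lt_ncard_iff (l.finite_toSet.subset fun _ hv => hv.1)).mp h
  obtain ⟨i, hi, rfl⟩ := List.getElem_of_mem ha
  obtain ⟨j, hj, rfl⟩ := List.getElem_of_mem hb
  obtain ⟨k, hk, rfl⟩ := List.getElem_of_mem hc
  have hij : i ≠ j := by rintro rfl; exact hab rfl
  have hik : i ≠ k := by rintro rfl; exact hac rfl
  have hjk : j ≠ k := by rintro rfl; exact hbc rfl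
  have := hclose i j hi hj hPa hPb
  have := hclose j i hj hi hPb hPa
  have := hclose i k hi hk hPa hPc
  have := hclose k i hk hi hPc hPa
  have := hclose j k hj hk hPb hPc
  have := hclose k j hk hj hPc hPb
  omega

/-- If `x ∉ π` is not a good neighbour of any vertex of a chordless `s`-`t` path `π`, then `x`
has at most two neighbours on `π`, and any two of its neighbours on `π` are consecutive. -/
theorem stmt5 (G : SimpleGraph V) (s t : V) (l : List V) (x : V)
    (hl : IsChordlessStPathL G s t l)
    (hx : x ∉ l)
    (hnotgood : ∀ i : ℕ, ¬ GoodNbr G s t l i x) :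
    {v | v ∈ l ∧ G.Adj x v}.ncard ≤ 2 ∧
      ∀ (i j : ℕ) (hi : i < l.length) (hj : j < l.length),
        G.Adj x (l.get ⟨i, hi⟩) → G.Adj x (l.get ⟨j, hj⟩) → i ≤ j + 1 ∧ j ≤ i + 1 := by
  have hclose : ∀ i j (hi : i < l.length) (hj : j < l.length),
      G.Adj x l[i] → G.Adj x l[j] → j ≤ i + 1 := by
    intro i j hi hj hxi hxj
    by_contra! hfar
    exact (exists_goodNbr_of_adj_of_adj hl hx hi hj hfar hxi hxj).elim hnotgood
  exact ⟨List.ncard_setOf_mem_and_le_two hclose,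
    fun i j hi hj hxi hxj => ⟨hclose j i hj hi hxj hxi, hclose i j hi hj hxi hxj⟩⟩
end

section
/- Let π = v₀…vᵢ u …v_ℓ be a chordless s-t path in G, and let G' be the induced subgraph of G obtained by removing v₀,…,vᵢ and all good neighbours of v₀,…,vᵢ (other than those on π up to u). Suppose S ⊆ N_{G'}(u) is a set of neighbours of u such that every path from u to t in G' passes through some vertex of S. Then every good neighbour of u (in the sense that some chordless s-t path of G extends the prefix v₀…vᵢu through it) that lies in G' belongs to S. -/
open SimpleGraph

variable {V : Type*}

/-- `l` is a cycle in `G`: at least 3 distinct vertices, each cyclically consecutive pair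
adjacent. -/
def IsCycleL (G : SimpleGraph V) (l : List V) : Prop :=
  3 ≤ l.length ∧ l.Nodup ∧
    ∀ (i : ℕ) (hi : i < l.length),
      G.Adj (l.get ⟨i, hi⟩) (l.get ⟨(i + 1) % l.length, Nat.mod_lt _ (by omega)⟩)

/-- `l` is a chordless (induced) cycle in `G`: a cycle such that any two adjacent vertices on
it are cyclically consecutive. -/
def IsChordlessCycleL (G : SimpleGraph V) (l : List V) : Prop :=
  IsCycleL G l ∧
    ∀ (i j : ℕ) (hi : i < l.length) (hj : j < l.length),
      G.Adj (l.get ⟨i, hi⟩) (l.get ⟨j, hj⟩) →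
        (i + 1) % l.length = j ∨ (j + 1) % l.length = i

/-- The subgraph of `G` induced by the complement of `R` (vertices of `R` deleted), kept on
the same vertex type. -/
def delSet (G : SimpleGraph V) (R : Set V) : SimpleGraph V where
  Adj a b := G.Adj a b ∧ a ∉ R ∧ b ∉ R
  symm := by
    first
    | exact fun _ _ ⟨h, ha, hb⟩ => ⟨h.symm, hb, ha⟩
    | exact ⟨fun _ _ ⟨h, ha, hb⟩ => ⟨h.symm, hb, ha⟩⟩
  loopless := by
    first
    | exact ⟨fun a ⟨h, _, _⟩ => G.loopless.irrefl a h⟩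
    | exact ⟨fun a ⟨h, _, _⟩ => G.irrefl h⟩

/-!
A good neighbour `w` of `u` is witnessed by a chordless path `v₀ … vᵢ u w … t`. Its part from
`u` survives the cleanup: it is disjoint from `v₀ … vᵢ`, and a good neighbour of some `vₖ`
(`k ≤ i`) lying beyond `u` would be a chord. So it is a `u`-`t` path of `G'` and meets `S`; but
`S` consists of neighbours of `u`, and by chordlessness the only one on this path is `w`.
-/

theorem IsPathL.delSet {G : SimpleGraph V} {R : Set V} {l : List V} (hl : IsPathL G l)
    (hR : ∀ x ∈ l, x ∉ R) : IsPathL (delSet G R) l :=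
  ⟨hl.1.imp_of_mem_imp fun _ _ ha hb hab => ⟨hab, hR _ ha, hR _ hb⟩, hl.2⟩

theorem IsStPathL.of_append_cons {G : SimpleGraph V} {s t b : V} {p q : List V}
    (h : IsStPathL G s t (p ++ b :: q)) : IsStPathL G b t (b :: q) :=
  ⟨⟨h.1.1.right_of_append, h.1.2.of_append_right⟩, rfl,
    by rw [← h.2.2, List.getLast?_append_cons]⟩

theorem NoChord.not_adj_of_mem_of_mem {G : SimpleGraph V} {p q : List V} {b x y : V}
    (h : NoChord G (p ++ b :: q)) (hx : x ∈ p) (hy : y ∈ q) : ¬ G.Adj x y := by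
  obtain ⟨m, hm, rfl⟩ := List.getElem_of_mem hx
  obtain ⟨n, hn, rfl⟩ := List.getElem_of_mem hy
  have := h m (p.length + (n + 1)) (by simp; omega) (by simp; omega) (by omega)
  simp only [List.get_eq_getElem, List.getElem_append_left hm] at this
  rw [List.getElem_append_right (by omega)] at this
  simpa using this

theorem GoodNbr.exists_eq_append {G : SimpleGraph V} {s t : V} {l : List V} {k : ℕ} {x : V}
    (h : GoodNbr G s t l k x) (hk : k < l.length) :
    ∃ r, IsChordlessStPathL G s t (l.take k ++ l[k] :: x :: r) := by
  obtain ⟨l', hl', r, rfl⟩ := h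
  have hsplit : l.take (k + 1) ++ [x] ++ r = l.take k ++ l[k] :: x :: r := by
    rw [List.take_add_one, List.getElem?_eq_getElem hk]
    simp only [Option.toList_some, List.append_assoc, List.cons_append, List.nil_append]
  exact ⟨r, hsplit ▸ hl'⟩

theorem GoodNbr.adj {G : SimpleGraph V} {s t : V} {l : List V} {k : ℕ} {x : V}
    (h : GoodNbr G s t l k x) (hk : k < l.length) : G.Adj l[k] x := by
  obtain ⟨r, hr⟩ := h.exists_eq_append hk
  exact (List.isChain_cons_cons.mp hr.1.1.1.right_of_append).1

theorem NoChord.not_goodNbr_of_mem {G : SimpleGraph V} {s t u y : V} {l r : List V} {i k : ℕ}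
    (h : NoChord G (l.take (i + 1) ++ u :: r)) (hi : i < l.length) (hk : k ≤ i) (hy : y ∈ r) :
    ¬ GoodNbr G s t l k y := fun hgood =>
  h.not_adj_of_mem_of_mem (List.mem_take_iff_getElem.mpr ⟨k, by omega, rfl⟩) hy
    (hgood.adj (by omega))

theorem stmt10_general (G : SimpleGraph V) (s t u : V) (l : List V) (i : ℕ)
    (hu : ∃ h : i + 1 < l.length, l.get ⟨i + 1, h⟩ = u)
    (R : Set V)
    (hR : R = ({x | ∃ k ≤ i, ∃ hk : k < l.length, x = l.get ⟨k, hk⟩} ∪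
               {x | ∃ k ≤ i, GoodNbr G s t l k x}) \ {u})
    (S : Set V)
    (hSsub : ∀ w ∈ S, (delSet G R).Adj u w)
    (hcut : ∀ q : List V, IsStPathL (delSet G R) u t q → ∃ x ∈ S, x ∈ q) :
    ∀ w : V, w ∉ R → GoodNbr G s t l (i + 1) w → w ∈ S := by
  intro w _ hgood
  obtain ⟨hi, hu⟩ := hu
  obtain ⟨r, hpath, hnc⟩ := hgood.exists_eq_append hi
  rw [List.get_eq_getElem] at hu
  rw [hu] at hpath hnc
  have havoid : ∀ y ∈ u :: w :: r, y ∉ R := by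
    rintro y hy hyR
    rw [hR] at hyR
    obtain ⟨⟨k, hk, hkl, rfl⟩ | ⟨k, hk, hgood⟩, hyu⟩ := hyR
    · exact List.disjoint_of_nodup_append hpath.1.2
        (List.mem_take_iff_getElem.mpr ⟨k, by omega, rfl⟩) hy
    · exact hnc.not_goodNbr_of_mem (by omega) hk
        ((List.mem_cons.mp hy).resolve_left hyu) hgood
  have hq : IsStPathL (delSet G R) u t (u :: w :: r) :=
    ⟨hpath.of_append_cons.1.delSet havoid, rfl, hpath.of_append_cons.2.2⟩
  obtain ⟨x, hxS, hxq⟩ := hcut _ hq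
  have hux := hSsub x hxS
  rcases List.mem_cons.mp hxq with rfl | hxwr
  · exact absurd rfl hux.ne
  rcases List.mem_cons.mp hxwr with rfl | hxr
  · exact hxS
  rw [show l.take (i + 1) ++ u :: w :: r = (l.take (i + 1) ++ [u]) ++ w :: r by simp] at hnc
  exact absurd hux.1 (hnc.not_adj_of_mem_of_mem (by simp) hxr)

/-- Cleanup, soundness half: let `π = v₀ … vᵢ u … v_ℓ` be a chordless `s`-`t` path, and `G'`
the graph obtained from `G` by removing `v₀, …, vᵢ` together with all good neighbours of
`v₀, …, vᵢ` other than `u`. If `S` is a set of neighbours of `u` in `G'` such that every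
`u`-`t` path of `G'` meets `S`, then every good neighbour of `u` lying in `G'` belongs to
`S`. -/
theorem stmt10 (G : SimpleGraph V) (s t u : V) (l : List V) (i : ℕ)
    (hl : IsChordlessStPathL G s t l)
    (hu : ∃ h : i + 1 < l.length, l.get ⟨i + 1, h⟩ = u)
    (R : Set V)
    (hR : R = ({x | ∃ k ≤ i, ∃ hk : k < l.length, x = l.get ⟨k, hk⟩} ∪
               {x | ∃ k ≤ i, GoodNbr G s t l k x}) \ {u})
    (S : Set V)
    (hSsub : ∀ w ∈ S, (delSet G R).Adj u w)
    (hcut : ∀ q : List V, IsStPathL (delSet G R) u t q → ∃ x ∈ S, x ∈ q) :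
    ∀ w : V, w ∉ R → GoodNbr G s t l (i + 1) w → w ∈ S :=
  stmt10_general G s t u l i hu R hR S hSsub hcut
end

section
/- Let G be a simple graph, u and t vertices, and π a u-t path in G. Let w be the neighbour of u appearing on π that is closest to t along π, and let π_{wt} be the suffix of π from w to t. Then the walk formed by the edge uw followed by π_{wt} contains an induced (chordless) u-t path in G that uses the edge uw; in particular, w lies on some chordless u-t path of G. -/
open SimpleGraph

variable {V : Type*}

/-!
Shortcutting a path along a chord gives a shorter path that is a sublist of it, so every path
contains a chordless sublist with the same ends. Apply this to `u w π_{wt}`: the resulting path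
starts at `u`, and its second vertex is a neighbour of `u` on `π_{wt}`, hence is `w`, because no
vertex of `π` after `w` is adjacent to `u`.
-/

theorem List.take_append_drop_sublist {α : Type*} (l : List α) {i j : ℕ} (h : i ≤ j) :
    (l.take i ++ l.drop j).Sublist l := by
  simpa using (l.drop_sublist_drop_left h).append_left (l.take i)

theorem List.eq_getElem_of_mem_drop {α : Type*} {p : α → Prop} {l : List α} {k : ℕ}
    (hk : k < l.length) (hafter : ∀ (j : ℕ) (hj : j < l.length), k < j → ¬ p l[j])
    {w : α} (hw : w ∈ l.drop k) (hpw : p w) : w = l[k] := by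
  obtain ⟨m, hm, rfl⟩ := List.mem_iff_getElem.1 hw
  rw [List.getElem_drop]
  rcases Nat.eq_zero_or_pos m with rfl | hpos
  · rfl
  · rw [List.getElem_drop] at hpw
    exact absurd hpw (hafter _ _ (by omega))

namespace IsStPathL

variable {G : SimpleGraph V} {s t : V} {l : List V}

lemma not_mem_drop (hl : IsStPathL G s t l) {k : ℕ} (hk : k ≠ 0) : s ∉ l.drop k := by
  obtain ⟨⟨-, hnodup⟩, hhead, -⟩ := hl
  obtain ⟨tl, rfl⟩ := List.head?_eq_some_iff.1 hhead
  obtain ⟨k, rfl⟩ := Nat.exists_eq_succ_of_ne_zero hk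
  exact fun hs => (List.nodup_cons.1 hnodup).1 (List.mem_of_mem_drop hs)

lemma suffix (hl : IsStPathL G s t l) (k : ℕ) (hk : k < l.length) :
    IsStPathL G l[k] t (l.drop k) := by
  obtain ⟨⟨hchain, hnodup⟩, -, hlast⟩ := hl
  refine ⟨⟨hchain.drop k, hnodup.sublist (l.drop_sublist k)⟩, by simp [hk], ?_⟩
  rwa [List.getLast?_drop, if_neg (by omega)]

lemma cons (hl : IsStPathL G s t l) {u : V} (hus : G.Adj u s) (hu : u ∉ l) :
    IsStPathL G u t (u :: l) := by
  obtain ⟨⟨hchain, hnodup⟩, hhead, hlast⟩ := hl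
  refine ⟨⟨List.isChain_cons.2 ⟨by simpa [hhead] using hus, hchain⟩,
    List.nodup_cons.2 ⟨hu, hnodup⟩⟩, rfl, ?_⟩
  simp [List.getLast?_cons, hlast]

lemma shortcut (hl : IsStPathL G s t l) {i j : ℕ} (hij : i + 1 < j) (hj : j < l.length)
    (hadj : G.Adj l[i] l[j]) : IsStPathL G s t (l.take (i + 1) ++ l.drop j) := by
  obtain ⟨⟨hchain, hnodup⟩, hhead, hlast⟩ := hl
  have htake : l.take (i + 1) ≠ [] := List.ne_nil_of_length_pos (by simp; omega)
  have hdrop : l.drop j ≠ [] := List.ne_nil_of_length_pos (by simp; omega)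
  refine ⟨⟨(hchain.take _).append (hchain.drop _) ?_,
    hnodup.sublist (l.take_append_drop_sublist hij.le)⟩, ?_, ?_⟩
  · intro x hx y hy
    rw [List.getLast?_take, if_neg (by omega), Nat.add_sub_cancel,
      List.getElem?_eq_getElem (by omega), Option.some_or, Option.mem_some_iff] at hx
    rw [List.head?_drop, List.getElem?_eq_getElem hj, Option.mem_some_iff] at hy
    exact hx ▸ hy ▸ hadj
  · rwa [List.head?_append_of_ne_nil _ htake, List.head?_take, if_neg (by omega)]
  · rwa [List.getLast?_append_of_ne_nil _ hdrop, List.getLast?_drop, if_neg (by omega)]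

theorem exists_chordless_sublist (hl : IsStPathL G s t l) :
    ∃ l', l'.Sublist l ∧ IsChordlessStPathL G s t l' := by
  induction h : l.length using Nat.strong_induction_on generalizing l with
  | _ n ih =>
    by_cases hc : NoChord G l
    · exact ⟨l, .refl l, hl, hc⟩
    simp only [NoChord, not_forall, not_not, List.get_eq_getElem] at hc
    obtain ⟨i, j, hi, hj, hij, hadj⟩ := hc
    obtain ⟨l', hsub, hl'⟩ := ih _ (by simp; omega) (hl.shortcut hij hj hadj) rfl
    exact ⟨l', hsub.trans (l.take_append_drop_sublist hij.le), hl'⟩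

end IsStPathL

/-- Let `π` be a `u`-`t` path and `w = π[k]` the neighbour of `u` on `π` closest to `t`.
Then there is a chordless `u`-`t` path of `G` starting with the edge `uw` whose vertices all
lie in `{u} ∪ π_{wt}`; in particular `w` lies on a chordless `u`-`t` path. -/
theorem stmt11 (G : SimpleGraph V) (u t : V) (l : List V)
    (hl : IsStPathL G u t l)
    (k : ℕ) (hk : k < l.length)
    (hadj : G.Adj u (l.get ⟨k, hk⟩))
    (hclosest : ∀ (j : ℕ) (hj : j < l.length), k < j → ¬ G.Adj u (l.get ⟨j, hj⟩)) :
    ∃ l' : List V, IsChordlessStPathL G u t l' ∧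
      l'.head? = some u ∧ l'[1]? = some (l.get ⟨k, hk⟩) ∧
      ∀ v ∈ l', v ∈ u :: l.drop k := by
  have hk0 : k ≠ 0 := by
    rintro rfl
    obtain ⟨tl, rfl⟩ := List.head?_eq_some_iff.1 hl.2.1
    exact G.irrefl hadj
  have hu : u ∉ l.drop k := hl.not_mem_drop hk0
  have hsuffix := hl.suffix k hk
  obtain ⟨l', hsub, hl'⟩ := (hsuffix.cons hadj hu).exists_chordless_sublist
  obtain ⟨r, rfl, hr⟩ : ∃ r, l' = u :: r ∧ r.Sublist (l.drop k) := by
    refine (List.sublist_cons_iff.1 hsub).resolve_left fun h => hu (h.subset ?_)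
    exact List.mem_of_mem_head? hl'.1.2.1
  cases r with
  | nil =>
    have hut : u = t := by simpa using hl'.1.2.2
    exact absurd (List.mem_of_mem_getLast? (hut ▸ hsuffix.2.2)) hu
  | cons w r =>
    have hw : w = l[k] := List.eq_getElem_of_mem_drop hk hclosest (hr.subset (by simp))
      (List.isChain_cons_cons.1 hl'.1.1.1).1
    subst hw
    exact ⟨_, hl', rfl, rfl, fun v hv => hsub.subset hv⟩
end

section
/- Let G be the graph with vertex set V₁ ∪ V₂ ∪ P where V₁ = {x₁,…,x_r}, |V₂| = r, P = {p₁,…,p_{r−1}}, edge set consisting of all edges between V₁ and V₂ together with edges x₁p₁, p₁x₂, x₂p₂, …, x_{r−1}p_{r−1}, p_{r−1}x_r. Then the path x₁ p₁ x₂ p₂ … x_{r−1} p_{r−1} x_r is a chordless path in G, and every edge of G is incident to at least one vertex of this path, so the sum of the degrees of the path's vertices is at least r², while the total number of vertices is 3r − 1. -/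
open SimpleGraph

variable {V : Type*}

/-- Vertex set of the Figure 1 graph: `V₁ = Fin r` (the `xᵢ`), `V₂ = Fin r`, and the
`r - 1` connector vertices `pᵢ`. -/
abbrev FigV (r : ℕ) := Fin r ⊕ Fin r ⊕ Fin (r - 1)

/-- The Figure 1 graph: complete bipartite between `V₁` and `V₂`, and `p_k` joined to
`x_k` and `x_{k+1}`. -/
def figG (r : ℕ) : SimpleGraph (FigV r) :=
  SimpleGraph.fromRel fun a b =>
    match a, b with
    | Sum.inl _, Sum.inr (Sum.inl _) => True
    | Sum.inl i, Sum.inr (Sum.inr k) => (i : ℕ) = (k : ℕ) ∨ (i : ℕ) = (k : ℕ) + 1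
    | _, _ => False

/-- The path `x₁ p₁ x₂ p₂ … x_{r-1} p_{r-1} x_r` in the Figure 1 graph. -/
def figPath (r : ℕ) (hr : 2 ≤ r) : List (FigV r) :=
  (List.range (2 * r - 1)).map fun n =>
    if n % 2 = 0 then Sum.inl ⟨n / 2 % r, Nat.mod_lt _ (by omega)⟩
    else Sum.inr (Sum.inr ⟨n / 2 % (r - 1), Nat.mod_lt _ (by omega)⟩)

/-!
The `k`-th vertex of the path is `x_{k/2}` for even `k` and `p_{k/2}` for odd `k`, so two of its
vertices are adjacent exactly when their positions differ by one: the `xᵢ` are pairwise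
non-adjacent, as are the `pᵢ`, and `pₖ` sees only `xₖ` and `x_{k+1}`. This gives the path and
its chordlessness. Every edge meets `V₁`, which lies on the path, and each `xᵢ` already has the
`r` neighbours `V₂`.
-/

namespace FigureOne

variable {r : ℕ}

@[simp]
lemma figG_adj_inl_inl (i j : Fin r) : ¬ (figG r).Adj (.inl i) (.inl j) := by
  simp [figG]

@[simp]
lemma figG_adj_inr_inr (a b : Fin r ⊕ Fin (r - 1)) : ¬ (figG r).Adj (.inr a) (.inr b) := by
  cases a <;> cases b <;> simp [figG]

@[simp]
lemma figG_adj_inl_inr_inr (i : Fin r) (k : Fin (r - 1)) :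
    (figG r).Adj (.inl i) (.inr (.inr k)) ↔ (i : ℕ) = k ∨ (i : ℕ) = k + 1 := by
  simp [figG]

@[simp]
lemma figG_adj_inr_inr_inl (i : Fin r) (k : Fin (r - 1)) :
    (figG r).Adj (.inr (.inr k)) (.inl i) ↔ (i : ℕ) = k ∨ (i : ℕ) = k + 1 := by
  rw [adj_comm, figG_adj_inl_inr_inr]

lemma figG_adj_inl_inr_inl (i j : Fin r) : (figG r).Adj (.inl i) (.inr (.inl j)) := by
  simp [figG]

lemma le_ncard_neighborSet_inl (i : Fin r) : r ≤ ((figG r).neighborSet (.inl i)).ncard := by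
  have hV₂ : Set.range (Sum.inr ∘ Sum.inl : Fin r → FigV r) ⊆ (figG r).neighborSet (.inl i) :=
    Set.range_subset_iff.2 (figG_adj_inl_inr_inl i)
  calc r = (Set.range (Sum.inr ∘ Sum.inl : Fin r → FigV r)).ncard := by
        rw [Set.ncard_range_of_injective (Sum.inr_injective.comp Sum.inl_injective), Nat.card_fin]
    _ ≤ _ := Set.ncard_le_ncard hV₂

lemma card_figV : Fintype.card (FigV r) = 3 * r - 1 := by
  simp only [Fintype.card_sum, Fintype.card_fin]
  omega

variable (hr : 2 ≤ r)

@[simp]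
lemma figPath_length : (figPath r hr).length = 2 * r - 1 := by
  simp [figPath]

lemma figPath_getElem {n : ℕ} (hn : n < (figPath r hr).length) :
    (figPath r hr)[n] =
      if h : n % 2 = 0 then .inl ⟨n / 2, by simp at hn; omega⟩
      else .inr (.inr ⟨n / 2, by simp at hn; omega⟩) := by
  simp only [figPath_length] at hn
  simp only [figPath, List.getElem_map, List.getElem_range]
  split_ifs
  · simp only [Sum.inl.injEq, Fin.mk.injEq]
    exact Nat.mod_eq_of_lt (by omega)
  · simp only [Sum.inr.injEq, Fin.mk.injEq]
    exact Nat.mod_eq_of_lt (by omega)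

lemma figG_adj_figPath_getElem_iff {i j : ℕ} (hi : i < (figPath r hr).length)
    (hj : j < (figPath r hr).length) :
    (figG r).Adj (figPath r hr)[i] (figPath r hr)[j] ↔ i + 1 = j ∨ j + 1 = i := by
  rw [figPath_getElem, figPath_getElem]
  by_cases hi2 : i % 2 = 0 <;> by_cases hj2 : j % 2 = 0 <;> simp [hi2, hj2] <;> omega

lemma figPath_getElem_injective {i j : ℕ} (hi : i < (figPath r hr).length)
    (hj : j < (figPath r hr).length) (h : (figPath r hr)[i] = (figPath r hr)[j]) : i = j := by
  rw [figPath_getElem, figPath_getElem] at h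
  by_cases hi2 : i % 2 = 0 <;> by_cases hj2 : j % 2 = 0 <;> simp [hi2, hj2] at h <;> omega

lemma isPathL_figPath : IsPathL (figG r) (figPath r hr) := by
  refine ⟨List.isChain_iff_getElem.2 fun n hn =>
    (figG_adj_figPath_getElem_iff hr _ _).2 (.inl rfl), ?_⟩
  exact List.nodup_iff_injective_getElem.2 fun i j h =>
    Fin.ext (figPath_getElem_injective hr i.2 j.2 h)

lemma noChord_figPath : NoChord (figG r) (figPath r hr) := by
  intro i j hi hj hij
  simp only [List.get_eq_getElem, figG_adj_figPath_getElem_iff]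
  omega

lemma inl_mem_figPath (i : Fin r) : .inl i ∈ figPath r hr := by
  have hi : 2 * (i : ℕ) < (figPath r hr).length := by simp; omega
  convert List.getElem_mem hi
  simp [figPath_getElem]

lemma exists_mem_figPath_of_mem_edgeSet {e : Sym2 (FigV r)} (he : e ∈ (figG r).edgeSet) :
    ∃ v ∈ figPath r hr, v ∈ e := by
  induction e with
  | h a b =>
    rcases a with i | a <;> rcases b with j | b
    · exact ⟨.inl i, inl_mem_figPath hr i, Sym2.mem_mk_left _ _⟩
    · exact ⟨.inl i, inl_mem_figPath hr i, Sym2.mem_mk_left _ _⟩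
    · exact ⟨.inl j, inl_mem_figPath hr j, Sym2.mem_mk_right _ _⟩
    · exact absurd he (figG_adj_inr_inr a b)

lemma sq_le_sum_ncard_neighborSet_figPath :
    r ^ 2 ≤ ∑ v ∈ (figPath r hr).toFinset, ((figG r).neighborSet v).ncard := by
  have hV₁ : Finset.univ.map .inl ⊆ (figPath r hr).toFinset := fun v hv => by
    obtain ⟨i, -, rfl⟩ := Finset.mem_map.1 hv
    exact List.mem_toFinset.2 (inl_mem_figPath hr i)
  calc r ^ 2 = ∑ _i : Fin r, r := by simp [sq]
    _ ≤ ∑ i : Fin r, ((figG r).neighborSet (.inl i)).ncard :=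
        Finset.sum_le_sum fun i _ => le_ncard_neighborSet_inl i
    _ = ∑ v ∈ Finset.univ.map .inl, ((figG r).neighborSet v).ncard := by
        rw [Finset.sum_map]; rfl
    _ ≤ _ := Finset.sum_le_sum_of_subset hV₁

end FigureOne

/-- The path `x₁ p₁ x₂ … p_{r-1} x_r` is chordless in the Figure 1 graph, every edge of the
graph is incident to a vertex of this path, the sum of the degrees of its vertices is at
least `r²`, and the graph has `3r - 1` vertices. -/
theorem stmt18 (r : ℕ) (hr : 2 ≤ r) :
    (IsPathL (figG r) (figPath r hr) ∧ NoChord (figG r) (figPath r hr)) ∧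
    (∀ e ∈ (figG r).edgeSet, ∃ v, v ∈ figPath r hr ∧ v ∈ e) ∧
    (r ^ 2 ≤ ∑ v ∈ (figPath r hr).toFinset, ((figG r).neighborSet v).ncard) ∧
    Fintype.card (FigV r) = 3 * r - 1 :=
  ⟨⟨FigureOne.isPathL_figPath hr, FigureOne.noChord_figPath hr⟩,
    fun _ he => FigureOne.exists_mem_figPath_of_mem_edgeSet hr he,
    FigureOne.sq_le_sum_ncard_neighborSet_figPath hr, FigureOne.card_figV⟩
end
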